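/- For ℓ ≥ 2 and n ≥ 1, N_ℓ(n) ≤ p(n) · M_1(n)^{ℓ-1}, where p(n) is the number of partitions of n and M_1(n) is the maximal product of parts over partitions of n. -/

import Mathlib

/-- `g ℓ n` is the number of (additive) subgroups of `ℤ^ℓ` of index `n`. -/
noncomputable def g (ℓ n : ℕ) : ℕ := Nat.card {H : AddSubgroup (Fin ℓ → ℤ) // H.index = n}

/-- `N ℓ n`: coefficients of `exp (∑_{n≥1} g_ℓ(n) tⁿ/n)`, given by the equivalent
recursion `n · N_ℓ(n) = ∑_{k=1}^n g_ℓ(k) N_ℓ(n-k)`, `N_ℓ(0) = 1`. -/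
noncomputable def N (ℓ : ℕ) : ℕ → ℚ
  | 0 => 1
  | n + 1 =>
    (∑ k ∈ (Finset.Icc 1 (n + 1)).attach, (g ℓ k.1 : ℚ) * N ℓ (n + 1 - k.1)) / (n + 1)
decreasing_by
  have h := Finset.mem_Icc.mp k.2; omega

/-- partition function -/
noncomputable def p (n : ℕ) : ℕ := Fintype.card (Nat.Partition n)

/-- maximal product of parts over partitions of `n` -/
noncomputable def M1 (n : ℕ) : ℕ :=
  sSup {P : ℕ | ∃ (k : ℕ) (m : Fin k → ℕ),
    (∀ i, 1 ≤ m i) ∧ (∑ i, m i = n) ∧ ∏ i, m i = P}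

/-! ### Auxiliary material: sum-of-divisors function -/

noncomputable def sig (n : ℕ) : ℕ := ∑ d ∈ n.divisors, d

lemma sig_mul_le {d m n : ℕ} (h : d * m = n) (hn : 0 < n) : d * sig m ≤ sig n := by
  have hd : 0 < d := by
    rcases Nat.eq_zero_or_pos d with h0 | h0
    · subst h0; simp at h; omega
    · exact h0
  calc d * sig m = ∑ e ∈ m.divisors, d * e := by rw [sig, Finset.mul_sum]
  _ = ∑ e ∈ m.divisors.image (fun e => d * e), e := by
      rw [Finset.sum_image (fun a _ b _ hab => by exact Nat.eq_of_mul_eq_mul_left hd hab)]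
  _ ≤ ∑ e ∈ n.divisors, e := by
      apply Finset.sum_le_sum_of_subset
      intro e he
      simp only [Finset.mem_image] at he
      obtain ⟨a, ha, rfl⟩ := he
      rw [Nat.mem_divisors] at ha ⊢
      exact ⟨mul_dvd_mul_left d ha.1 |>.trans (h ▸ dvd_refl n), hn.ne'⟩
  _ = sig n := rfl

lemma self_le_sig {n : ℕ} (hn : 0 < n) : n ≤ sig n :=
  Finset.single_le_sum (f := id) (fun _ _ => Nat.zero_le _) (Nat.mem_divisors_self n hn.ne')

lemma card_divisors_le {n : ℕ} : n.divisors.card ≤ n := by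
  calc n.divisors.card ≤ (Finset.Icc 1 n).card := Finset.card_le_card (fun d hd => by
        rw [Nat.mem_divisors] at hd
        rw [Finset.mem_Icc]
        exact ⟨Nat.pos_of_dvd_of_pos hd.1 (Nat.pos_of_ne_zero hd.2),
          Nat.le_of_dvd (Nat.pos_of_ne_zero hd.2) hd.1⟩)
  _ = n := by simp

/-! ### Auxiliary material: the maximum-product function `M1` -/

def M1set (n : ℕ) : Set ℕ := {P : ℕ | ∃ (k : ℕ) (m : Fin k → ℕ),
    (∀ i, 1 ≤ m i) ∧ (∑ i, m i = n) ∧ ∏ i, m i = P}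

lemma M1_eq_sSup (n : ℕ) : M1 n = sSup (M1set n) := rfl

lemma M1set_nonempty (n : ℕ) : (M1set n).Nonempty :=
  ⟨1, n, fun _ => 1, fun _ => le_refl 1, by simp, by simp⟩

lemma M1set_bdd (n : ℕ) : BddAbove (M1set n) := by
  refine ⟨n ^ n, fun P hP => ?_⟩
  obtain ⟨k, m, h1, h2, h3⟩ := hP
  have hk : k ≤ n := by
    calc k = ∑ _i : Fin k, 1 := by simp
    _ ≤ ∑ i, m i := Finset.sum_le_sum (fun i _ => h1 i)
    _ = n := h2
  have hmi : ∀ i, m i ≤ n := fun i =>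
    h2 ▸ Finset.single_le_sum (f := m) (fun _ _ => Nat.zero_le _) (Finset.mem_univ i)
  rcases Nat.eq_zero_or_pos n with rfl | hn
  · interval_cases k
    simp at h3; omega
  calc P = ∏ i, m i := h3.symm
  _ ≤ ∏ _i : Fin k, n := Finset.prod_le_prod (fun _ _ => Nat.zero_le _) (fun i _ => hmi i)
  _ = n ^ k := by simp
  _ ≤ n ^ n := Nat.pow_le_pow_right hn hk

lemma le_M1 {n P : ℕ} (hP : P ∈ M1set n) : P ≤ M1 n := le_csSup (M1set_bdd n) hP

lemma M1_mem (n : ℕ) : M1 n ∈ M1set n := Nat.sSup_mem (M1set_nonempty n) (M1set_bdd n)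

lemma one_le_M1 (n : ℕ) : 1 ≤ M1 n := by
  obtain ⟨k, m, h1, h2, h3⟩ := M1_mem n
  rw [M1_eq_sSup] at h3 ⊢
  rw [← h3]
  exact Finset.one_le_prod' (fun i _ => h1 i)

lemma mul_M1_le {k n : ℕ} (hk1 : 1 ≤ k) (hk : k ≤ n) : k * M1 (n - k) ≤ M1 n := by
  obtain ⟨k', m, h1, h2, h3⟩ := M1_mem (n - k)
  apply le_M1
  refine ⟨k' + 1, Fin.cons k m, ?_, ?_, ?_⟩
  · intro i
    refine Fin.cases ?_ ?_ i
    · exact hk1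
    · exact h1
  · rw [Fin.sum_cons, h2]; omega
  · rw [Fin.prod_cons, h3]

/-! ### Auxiliary material: the partition identity (inequality form) -/

open Finset

lemma p_le_A {n d j : ℕ} (hd : 1 ≤ d) (hj : 1 ≤ j) (hdj : d * j ≤ n) :
    p (n - d * j) ≤ (Finset.univ.filter
      (fun lam : Nat.Partition n => j ≤ Multiset.count d lam.parts)).card := by
  rw [← Fintype.card_subtype]
  refine Fintype.card_le_of_injective (fun mu =>
    ⟨⟨mu.parts + Multiset.replicate j d,
     by intro i hi
        rcases Multiset.mem_add.mp hi with h | h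
        · exact mu.parts_pos h
        · rw [Multiset.eq_of_mem_replicate h]; exact hd,
     by rw [Multiset.sum_add, mu.parts_sum, Multiset.sum_replicate, smul_eq_mul, mul_comm j d]
        omega⟩, by
     simp only [Multiset.count_add, Multiset.count_replicate_self]
     omega⟩) ?_
  intro a b hab
  simp only [Subtype.mk.injEq, Nat.Partition.mk.injEq] at hab
  ext1
  exact add_right_cancel hab

lemma count_le {n d : ℕ} (hd : 1 ≤ d) (lam : Nat.Partition n) :
    Multiset.count d lam.parts ≤ n := by
  have hle : Multiset.replicate (Multiset.count d lam.parts) d ≤ lam.parts :=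
    Multiset.le_count_iff_replicate_le.mp le_rfl
  obtain ⟨u, hu⟩ := Multiset.le_iff_exists_add.mp hle
  have hs := lam.parts_sum
  rw [hu, Multiset.sum_add, Multiset.sum_replicate, smul_eq_mul] at hs
  nlinarith [Nat.zero_le u.sum]

lemma part_sum_eq {n : ℕ} (lam : Nat.Partition n) :
    ∑ d ∈ Icc 1 n, d * Multiset.count d lam.parts = n := by
  have hsub : lam.parts.toFinset ⊆ Icc 1 n := by
    intro a ha
    rw [Multiset.mem_toFinset] at ha
    rw [mem_Icc]
    refine ⟨lam.parts_pos ha, ?_⟩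
    calc a ≤ lam.parts.sum := Multiset.single_le_sum (fun x _ => Nat.zero_le x) _ ha
    _ = n := lam.parts_sum
  calc ∑ d ∈ Icc 1 n, d * Multiset.count d lam.parts
      = ∑ d ∈ lam.parts.toFinset, d * Multiset.count d lam.parts := by
        refine (Finset.sum_subset hsub ?_).symm
        intro x _ hx
        rw [Multiset.mem_toFinset] at hx
        rw [Multiset.count_eq_zero_of_notMem hx, mul_zero]
  _ = (∑ d ∈ lam.parts.toFinset, Multiset.count d lam.parts • id d) := by
        refine Finset.sum_congr rfl (fun d _ => ?_); rw [smul_eq_mul, id, mul_comm]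
  _ = (lam.parts.map id).sum := (Finset.sum_multiset_map_count _ _).symm
  _ = n := by rw [Multiset.map_id]; exact lam.parts_sum

lemma sum_A_eq {n d : ℕ} (hd : 1 ≤ d) :
    ∑ j ∈ Icc 1 n, (univ.filter
        (fun lam : Nat.Partition n => j ≤ Multiset.count d lam.parts)).card
      = ∑ lam : Nat.Partition n, Multiset.count d lam.parts := by
  simp_rw [Finset.card_filter]
  rw [Finset.sum_comm]
  refine Finset.sum_congr rfl (fun lam _ => ?_)
  rw [← Finset.card_filter]
  have hc := count_le hd lam
  have he : (Icc 1 n).filter (fun j => j ≤ Multiset.count d lam.parts)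
      = Icc 1 (Multiset.count d lam.parts) := by
    ext j
    simp only [mem_Icc, mem_filter]
    omega
  rw [he, Nat.card_Icc]
  omega

lemma key_partition (n : ℕ) :
    ∑ k ∈ Icc 1 n, sig k * p (n - k) ≤ n * p n := by
  classical
  set A : ℕ → ℕ → ℕ := fun d j => (univ.filter
      (fun lam : Nat.Partition n => j ≤ Multiset.count d lam.parts)).card with hA
  have step1 : ∑ k ∈ Icc 1 n, sig k * p (n - k)
      = ∑ k ∈ Icc 1 n, ∑ x ∈ k.divisorsAntidiagonal, x.1 * p (n - x.1 * x.2) := by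
    refine Finset.sum_congr rfl (fun k hk => ?_)
    have h1 : ∑ x ∈ k.divisorsAntidiagonal, x.1 * p (n - x.1 * x.2)
        = ∑ x ∈ k.divisorsAntidiagonal, x.1 * p (n - k) := by
      refine Finset.sum_congr rfl (fun x hx => ?_)
      rw [(Nat.mem_divisorsAntidiagonal.mp hx).1]
    rw [sig, Finset.sum_mul, h1]
    exact (Nat.sum_divisorsAntidiagonal fun i _ => i * p (n - k)).symm
  have hdisj : ∀ k1 ∈ Icc 1 n, ∀ k2 ∈ Icc 1 n, k1 ≠ k2 →
      Disjoint (Nat.divisorsAntidiagonal k1) (Nat.divisorsAntidiagonal k2) := by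
    intro k1 _ k2 _ hne
    refine Finset.disjoint_left.mpr (fun x h1 h2 => hne ?_)
    rw [← (Nat.mem_divisorsAntidiagonal.mp h1).1, ← (Nat.mem_divisorsAntidiagonal.mp h2).1]
  have step2 : ∑ k ∈ Icc 1 n, ∑ x ∈ k.divisorsAntidiagonal, x.1 * p (n - x.1 * x.2)
      = ∑ x ∈ (Icc 1 n).biUnion Nat.divisorsAntidiagonal, x.1 * p (n - x.1 * x.2) :=
    (Finset.sum_biUnion hdisj).symm
  have hmemB : ∀ x ∈ (Icc 1 n).biUnion Nat.divisorsAntidiagonal,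
      1 ≤ x.1 ∧ 1 ≤ x.2 ∧ x.1 * x.2 ≤ n := by
    intro x hx
    rw [Finset.mem_biUnion] at hx
    obtain ⟨k, hk, hxk⟩ := hx
    obtain ⟨h1, h2⟩ := Nat.mem_divisorsAntidiagonal.mp hxk
    rw [mem_Icc] at hk
    constructor
    · rcases Nat.eq_zero_or_pos x.1 with h | h
      · exfalso; apply h2; rw [← h1, h, zero_mul]
      · exact h
    constructor
    · rcases Nat.eq_zero_or_pos x.2 with h | h
      · exfalso; apply h2; rw [← h1, h]; ring
      · exact h
    · omega
  have step3 : ∑ x ∈ (Icc 1 n).biUnion Nat.divisorsAntidiagonal, x.1 * p (n - x.1 * x.2)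
      ≤ ∑ x ∈ (Icc 1 n).biUnion Nat.divisorsAntidiagonal, x.1 * A x.1 x.2 := by
    refine Finset.sum_le_sum (fun x hx => ?_)
    obtain ⟨h1, h2, h3⟩ := hmemB x hx
    exact Nat.mul_le_mul_left _ (p_le_A h1 h2 h3)
  have hsub : (Icc 1 n).biUnion Nat.divisorsAntidiagonal ⊆ (Icc 1 n) ×ˢ (Icc 1 n) := by
    intro x hx
    obtain ⟨h1, h2, h3⟩ := hmemB x hx
    rw [Finset.mem_product, mem_Icc, mem_Icc]
    refine ⟨⟨h1, ?_⟩, h2, ?_⟩ <;> nlinarith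
  have step4 : ∑ x ∈ (Icc 1 n).biUnion Nat.divisorsAntidiagonal, x.1 * A x.1 x.2
      ≤ ∑ x ∈ (Icc 1 n) ×ˢ (Icc 1 n), x.1 * A x.1 x.2 :=
    Finset.sum_le_sum_of_subset hsub
  have step5 : ∑ x ∈ (Icc 1 n) ×ˢ (Icc 1 n), x.1 * A x.1 x.2 = n * p n := by
    rw [Finset.sum_product]
    calc ∑ d ∈ Icc 1 n, ∑ j ∈ Icc 1 n, d * A d j
        = ∑ d ∈ Icc 1 n, d * ∑ j ∈ Icc 1 n, A d j := by
          refine Finset.sum_congr rfl (fun d _ => ?_); rw [Finset.mul_sum]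
    _ = ∑ d ∈ Icc 1 n, d * ∑ lam : Nat.Partition n, Multiset.count d lam.parts := by
          refine Finset.sum_congr rfl (fun d hd => ?_)
          rw [hA, sum_A_eq (mem_Icc.mp hd).1]
    _ = ∑ lam : Nat.Partition n, ∑ d ∈ Icc 1 n, d * Multiset.count d lam.parts := by
          simp_rw [Finset.mul_sum]
          rw [Finset.sum_comm]
    _ = ∑ _lam : Nat.Partition n, n := by
          refine Finset.sum_congr rfl (fun lam _ => part_sum_eq lam)
    _ = n * p n := by rw [Finset.sum_const, p, Fintype.card]; ring
  rw [step1, step2]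
  exact (step3.trans step4).trans (le_of_eq step5)

/-! ### Auxiliary material: structure of finite-index subgroups of `ℤ × W` -/

lemma int_subgroup_eq_zmultiples (J : AddSubgroup ℤ) :
    J = AddSubgroup.zmultiples ((J.index : ℤ)) := by
  obtain ⟨a, ha⟩ := Int.subgroup_cyclic J
  have h2 : J = AddSubgroup.zmultiples ((a.natAbs : ℤ)) := by
    rw [ha, Int.zmultiples_natAbs, AddSubgroup.zmultiples_eq_closure]
  have h3 : J.index = a.natAbs := by
    rw [h2, AddSubgroup.index]
    have e : ℤ ⧸ AddSubgroup.zmultiples ((a.natAbs : ℕ) : ℤ) ≃+ ZMod a.natAbs :=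
      Int.quotientZMultiplesNatEquivZMod a.natAbs
    rw [Nat.card_congr e.toEquiv, Nat.card_zmod]
  rw [h3, ← h2]

namespace Step

variable {W : Type} [AddCommGroup W]

variable (H : AddSubgroup (ℤ × W))

/-- image of H under second projection -/
def Kof : AddSubgroup W := H.map (AddMonoidHom.snd ℤ W)
/-- intersection of H with ℤ × 0 -/
def Jof : AddSubgroup ℤ := H.comap (AddMonoidHom.inl ℤ W)

lemma mem_Jof {z : ℤ} : z ∈ Jof H ↔ (z, 0) ∈ H := Iff.rfl

lemma mem_Kof {w : W} : w ∈ Kof H ↔ ∃ z : ℤ, (z, w) ∈ H := by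
  constructor
  · rintro ⟨⟨z, w'⟩, hz, rfl⟩
    exact ⟨z, hz⟩
  · rintro ⟨z, hz⟩
    exact ⟨(z, w), hz, rfl⟩

/-- the subgroup `M = snd⁻¹ K ⊇ H` -/
def Mof : AddSubgroup (ℤ × W) := (Kof H).comap (AddMonoidHom.snd ℤ W)

lemma H_le_Mof : H ≤ Mof H := fun x hx => ⟨x, hx, rfl⟩

lemma Mof_index : (Mof H).index = (Kof H).index :=
  AddSubgroup.index_comap_of_surjective _ (fun w => ⟨(0, w), rfl⟩)

noncomputable def iota : ℤ →+ (Mof H) :=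
  AddMonoidHom.codRestrict (AddMonoidHom.inl ℤ W) (Mof H)
    (fun z => by show (0 : W) ∈ Kof H; exact zero_mem _)

noncomputable def psi : ℤ →+ (Mof H) ⧸ ((H.addSubgroupOf (Mof H))) :=
  (QuotientAddGroup.mk' _).comp (iota H)

lemma psi_surjective : Function.Surjective (psi H) := by
  rintro ⟨⟨⟨z, w⟩, hw⟩⟩
  have hw' : w ∈ Kof H := hw
  obtain ⟨z₀, hz₀⟩ := (mem_Kof H).mp hw'
  refine ⟨z - z₀, ?_⟩
  show QuotientAddGroup.mk _ = QuotientAddGroup.mk _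
  rw [QuotientAddGroup.eq_iff_sub_mem]
  rw [AddSubgroup.mem_addSubgroupOf]
  show ((z - z₀ : ℤ), (0 : W)) - (z, w) ∈ H
  have : ((z - z₀ : ℤ), (0:W)) - (z, w) = -(z₀, w) := by
    ext <;> simp
  rw [this]
  exact neg_mem hz₀

lemma psi_ker : (psi H).ker = Jof H := by
  ext z
  rw [AddMonoidHom.mem_ker, psi, AddMonoidHom.comp_apply, QuotientAddGroup.mk'_apply,
    QuotientAddGroup.eq_zero_iff, AddSubgroup.mem_addSubgroupOf]
  exact Iff.rfl

lemma index_mul_index : (Jof H).index * (Kof H).index = H.index := by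
  have h1 : (H.addSubgroupOf (Mof H)).index * (Mof H).index = H.index :=
    AddSubgroup.relIndex_mul_index (H_le_Mof H)
  have h2 : (Jof H).index = (H.addSubgroupOf (Mof H)).index := by
    have e : ℤ ⧸ (psi H).ker ≃+ (Mof H) ⧸ (H.addSubgroupOf (Mof H)) :=
      QuotientAddGroup.quotientKerEquivOfSurjective _ (psi_surjective H)
    rw [← psi_ker H]
    rw [AddSubgroup.index, AddSubgroup.index]
    exact Nat.card_congr e.toEquiv
  rw [h2, ← Mof_index H]
  exact h1

lemma sub_mem_Jof {z z' : ℤ} {w : W} (h : (z, w) ∈ H) (h' : (z', w) ∈ H) :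
    z - z' ∈ Jof H := by
  have hs : ((z, w) - (z', w)) ∈ H := sub_mem h h'
  have he : ((z, w) - (z', w)) = ((z - z' : ℤ), (0 : W)) := by
    ext <;> simp
  rw [he] at hs
  exact hs

lemma dvd_of_both_mem {z z' : ℤ} {w : W} (h : (z, w) ∈ H) (h' : (z', w) ∈ H) :
    ((Jof H).index : ℤ) ∣ z - z' := by
  have h2 : z - z' ∈ AddSubgroup.zmultiples (((Jof H).index : ℤ)) :=
    int_subgroup_eq_zmultiples (Jof H) ▸ sub_mem_Jof H h h'
  rwa [Int.mem_zmultiples_iff] at h2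

lemma cast_eq_of_mem {z z' : ℤ} {w : W} (h : (z, w) ∈ H) (h' : (z', w) ∈ H) :
    ((z : ZMod (Jof H).index)) = ((z' : ℤ) : ZMod (Jof H).index) := by
  have hd := dvd_of_both_mem H h h'
  have h0 : (((z - z' : ℤ)) : ZMod (Jof H).index) = 0 :=
    (ZMod.intCast_zmod_eq_zero_iff_dvd _ _).mpr hd
  push_cast at h0
  linear_combination h0

lemma choose_spec' (k : Kof H) :
    ((Classical.choose ((mem_Kof H).mp k.2) : ℤ), (k : W)) ∈ H :=
  Classical.choose_spec ((mem_Kof H).mp k.2)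

noncomputable def sHom : (Kof H) →+ ZMod (Jof H).index where
  toFun := fun k => ((Classical.choose ((mem_Kof H).mp k.2) : ℤ) : ZMod (Jof H).index)
  map_zero' := by
    have h0 : ((0 : ℤ), (0 : W)) ∈ H := zero_mem H
    have := cast_eq_of_mem H (choose_spec' H 0) h0
    simpa using this
  map_add' := by
    intro k1 k2
    have h12 : ((Classical.choose ((mem_Kof H).mp k1.2)
        + Classical.choose ((mem_Kof H).mp k2.2) : ℤ), ((k1 + k2 : Kof H) : W)) ∈ H := by
      have := add_mem (choose_spec' H k1) (choose_spec' H k2)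
      simpa using this
    have hc := cast_eq_of_mem H (choose_spec' H (k1 + k2)) h12
    rw [hc]
    push_cast
    ring

lemma sHom_eq {z : ℤ} {w : W} (h : (z, w) ∈ H) (hw : w ∈ Kof H) :
    sHom H ⟨w, hw⟩ = (z : ZMod (Jof H).index) :=
  cast_eq_of_mem H (choose_spec' H ⟨w, hw⟩) h

lemma mem_iff_sHom {z : ℤ} {w : W} :
    (z, w) ∈ H ↔ ∃ hw : w ∈ Kof H, sHom H ⟨w, hw⟩ = (z : ZMod (Jof H).index) := by
  constructor
  · intro h
    have hw : w ∈ Kof H := (mem_Kof H).mpr ⟨z, h⟩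
    exact ⟨hw, sHom_eq H h hw⟩
  · rintro ⟨hw, hs⟩
    obtain ⟨z₀, h₀⟩ := (mem_Kof H).mp hw
    have hz₀ : sHom H ⟨w, hw⟩ = (z₀ : ZMod (Jof H).index) := sHom_eq H h₀ hw
    have hcast : ((z - z₀ : ℤ) : ZMod (Jof H).index) = 0 := by
      push_cast
      rw [← hs, hz₀]
      ring
    have hdvd : ((Jof H).index : ℤ) ∣ z - z₀ :=
      (ZMod.intCast_zmod_eq_zero_iff_dvd _ _).mp hcast
    have hJ : z - z₀ ∈ Jof H := by
      rw [int_subgroup_eq_zmultiples (Jof H), Int.mem_zmultiples_iff]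
      exact hdvd
    have h1 : ((z - z₀ : ℤ), (0 : W)) ∈ H := hJ
    have h2 := add_mem h1 h₀
    have he : ((z - z₀ : ℤ), (0 : W)) + (z₀, w) = (z, w) := by ext <;> simp
    rwa [he] at h2

lemma Jof_mul_Kof {n : ℕ} (H : AddSubgroup (ℤ × W)) (hH : H.index = n) :
    (Jof H).index * (Kof H).index = n := by rw [← hH]; exact index_mul_index H

lemma Jof_mem_divisors {n : ℕ} (H : AddSubgroup (ℤ × W)) (hH : H.index = n) (hn : 0 < n) :
    (Jof H).index ∈ n.divisors := by
  rw [Nat.mem_divisors]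
  exact ⟨⟨(Kof H).index, (Jof_mul_Kof H hH).symm⟩, hn.ne'⟩

lemma Kof_index_eq {n : ℕ} (H : AddSubgroup (ℤ × W)) (hH : H.index = n) (hn : 0 < n) :
    (Kof H).index = n / (Jof H).index := by
  have h := Jof_mul_Kof H hH
  have hJ : 0 < (Jof H).index := by
    rcases Nat.eq_zero_or_pos (Jof H).index with h0 | h0
    · rw [h0, zero_mul] at h; omega
    · exact h0
  exact (Nat.div_eq_of_eq_mul_left hJ (by rw [← h]; ring)).symm

theorem step_card (ℓ : ℕ) {n : ℕ} (hn : 0 < n)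
    (hWfin : ∀ m : ℕ, 0 < m → Finite {K : AddSubgroup W // K.index = m})
    (hWhomfin : ∀ (K : AddSubgroup W) (d : ℕ), 0 < d → Finite (↥K →+ ZMod d))
    (hWhom : ∀ (K : AddSubgroup W) (d : ℕ), 0 < d → Nat.card (↥K →+ ZMod d) ≤ d ^ ℓ) :
    Finite {H : AddSubgroup (ℤ × W) // H.index = n} ∧
    Nat.card {H : AddSubgroup (ℤ × W) // H.index = n}
      ≤ ∑ d ∈ n.divisors, d ^ ℓ * Nat.card {K : AddSubgroup W // K.index = n / d} := by
  classical
  let SK : ℕ → Type _ := fun d => {K : AddSubgroup W // K.index = n / d}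
  let T := Σ d : {d // d ∈ n.divisors}, Σ K : SK d.1, (↥(K.1) →+ ZMod d.1)
  have hdpos : ∀ d : {d // d ∈ n.divisors}, 0 < (d : ℕ) :=
    fun d => Nat.pos_of_mem_divisors d.2
  have hqpos : ∀ d : {d // d ∈ n.divisors}, 0 < n / (d : ℕ) :=
    fun d => Nat.div_pos (Nat.le_of_dvd hn (Nat.mem_divisors.mp d.2).1) (hdpos d)
  haveI hSKfin : ∀ d : {d // d ∈ n.divisors}, Finite (SK d.1) :=
    fun d => hWfin _ (hqpos d)
  haveI hHomFin : ∀ (d : {d // d ∈ n.divisors}) (K : SK d.1), Finite (↥(K.1) →+ ZMod d.1) :=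
    fun d K => hWhomfin _ _ (hdpos d)
  haveI hTfin : Finite T := by infer_instance
  let Φ : {H : AddSubgroup (ℤ × W) // H.index = n} → T := fun X =>
    ⟨⟨(Jof X.1).index, Jof_mem_divisors X.1 X.2 hn⟩,
     ⟨⟨Kof X.1, Kof_index_eq X.1 X.2 hn⟩, sHom X.1⟩⟩
  have hmem : ∀ (X : {H : AddSubgroup (ℤ × W) // H.index = n}) (x : ℤ × W),
      x ∈ X.1 ↔ ∃ hw : x.2 ∈ ((Φ X).2.1.1 : AddSubgroup W),
        (Φ X).2.2 ⟨x.2, hw⟩ = (x.1 : ZMod ((Φ X).1 : ℕ)) := by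
    rintro X ⟨z, w⟩
    exact mem_iff_sHom X.1
  have hinj : Function.Injective Φ := by
    intro a b hab
    apply Subtype.ext
    ext x
    rw [hmem a x, hmem b x, hab]
  refine ⟨Finite.of_injective Φ hinj, ?_⟩
  calc Nat.card {H : AddSubgroup (ℤ × W) // H.index = n} ≤ Nat.card T :=
        Nat.card_le_card_of_injective Φ hinj
  _ ≤ ∑ d ∈ n.divisors, d ^ ℓ * Nat.card (SK d) := by
      haveI : ∀ (d : {d // d ∈ n.divisors}) (K : SK d.1), Fintype (↥(K.1) →+ ZMod d.1) :=
        fun d K => @Fintype.ofFinite _ (hHomFin d K)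
      haveI : ∀ d : {d // d ∈ n.divisors}, Fintype (SK d.1) :=
        fun d => @Fintype.ofFinite _ (hSKfin d)
      show Nat.card (Σ d : {d // d ∈ n.divisors}, Σ K : SK d.1, (↥(K.1) →+ ZMod d.1)) ≤ _
      rw [Nat.card_eq_fintype_card, Fintype.card_sigma]
      have hb : ∀ d : {d // d ∈ n.divisors},
          Fintype.card (Σ K : SK d.1, (↥(K.1) →+ ZMod d.1)) ≤ (d:ℕ) ^ ℓ * Nat.card (SK d.1) := by
        intro d
        refine le_trans (le_of_eq (Fintype.card_sigma)) ?_
        calc ∑ K : SK d.1, Fintype.card (↥(K.1) →+ ZMod d.1)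
            ≤ ∑ _K : SK d.1, (d:ℕ) ^ ℓ := by
              refine Finset.sum_le_sum (fun K _ => ?_)
              rw [← Nat.card_eq_fintype_card]
              exact hWhom _ _ (hdpos d)
        _ = Fintype.card (SK d.1) * (d:ℕ) ^ ℓ := by
              rw [Finset.sum_const, Finset.card_univ, smul_eq_mul]
        _ = (d:ℕ) ^ ℓ * Nat.card (SK d.1) := by rw [Nat.card_eq_fintype_card]; ring
      calc ∑ d : {d // d ∈ n.divisors}, Fintype.card (Σ K : SK d.1, (↥(K.1) →+ ZMod d.1))
          ≤ ∑ d : {d // d ∈ n.divisors}, (d:ℕ) ^ ℓ * Nat.card (SK d.1) :=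
            Finset.sum_le_sum (fun d _ => hb d)
      _ = ∑ d ∈ n.divisors, d ^ ℓ * Nat.card (SK d) :=
            Finset.sum_coe_sort n.divisors (fun d => d ^ ℓ * Nat.card (SK d))

end Step

/-! ### Hom-counting for subgroups of `ℤ^ℓ` -/

lemma hom_bound (ℓ : ℕ) (K : AddSubgroup (Fin ℓ → ℤ)) (d : ℕ) (hd : 0 < d) :
    Finite (↥K →+ ZMod d) ∧ Nat.card (↥K →+ ZMod d) ≤ d ^ ℓ := by
  haveI : NeZero d := ⟨hd.ne'⟩
  obtain ⟨r, b⟩ := Submodule.basisOfPid (Pi.basisFun ℤ (Fin ℓ))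
    (AddSubgroup.toIntSubmodule K)
  have hr : r ≤ ℓ := by
    have h := Module.Basis.card_le_card_of_submodule (AddSubgroup.toIntSubmodule K)
      (Pi.basisFun ℤ (Fin ℓ)) b
    simpa using h
  have e1 : (↥K →+ ZMod d) ≃ₗ[ℕ] (↥(AddSubgroup.toIntSubmodule K) →ₗ[ℤ] ZMod d) :=
    addMonoidHomLequivInt ℕ
  have e2 : (Fin r → ZMod d) ≃ₗ[ℕ] (↥(AddSubgroup.toIntSubmodule K) →ₗ[ℤ] ZMod d) :=
    Module.Basis.constr b ℕ
  have e : (↥K →+ ZMod d) ≃ (Fin r → ZMod d) :=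
    e1.toEquiv.trans e2.toEquiv.symm
  constructor
  · exact Finite.of_equiv _ e.symm
  · rw [Nat.card_congr e]
    have hc : Nat.card (Fin r → ZMod d) = d ^ r := by
      rw [Nat.card_fun, Nat.card_eq_fintype_card (α := Fin r), Fintype.card_fin, Nat.card_zmod]
    rw [hc]
    exact Nat.pow_le_pow_right hd hr

/-! ### Transfer along AddEquiv and the main bound on `g` -/

def idxEquiv {G G' : Type} [AddCommGroup G] [AddCommGroup G'] (e : G ≃+ G') (n : ℕ) :
    {H : AddSubgroup G // H.index = n} ≃ {H' : AddSubgroup G' // H'.index = n} where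
  toFun X := ⟨X.1.map e.toAddMonoidHom, by
    rw [AddSubgroup.index_map_eq _ e.surjective (fun x hx => by
      have h0 : x = 0 := e.injective (by simpa [AddMonoidHom.mem_ker] using hx)
      rw [h0]; exact zero_mem _)]
    exact X.2⟩
  invFun X := ⟨X.1.map e.symm.toAddMonoidHom, by
    rw [AddSubgroup.index_map_eq _ e.symm.surjective (fun x hx => by
      have h0 : x = 0 := e.symm.injective (by simpa [AddMonoidHom.mem_ker] using hx)
      rw [h0]; exact zero_mem _)]
    exact X.2⟩
  left_inv X := by
    apply Subtype.ext
    show (X.1.map e.toAddMonoidHom).map e.symm.toAddMonoidHom = X.1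
    rw [AddSubgroup.map_map]
    convert AddSubgroup.map_id X.1
    ext x
    simp
  right_inv X := by
    apply Subtype.ext
    show (X.1.map e.symm.toAddMonoidHom).map e.toAddMonoidHom = X.1
    rw [AddSubgroup.map_map]
    convert AddSubgroup.map_id X.1
    ext x
    simp

def piSuccEquiv (ℓ : ℕ) : (Fin (ℓ+1) → ℤ) ≃+ ℤ × (Fin ℓ → ℤ) :=
  { (Fin.consEquiv (fun _ : Fin (ℓ+1) => ℤ)).symm with map_add' := fun _ _ => rfl }

def pi1Equiv : (Fin 1 → ℤ) ≃+ ℤ :=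
  { Equiv.funUnique (Fin 1) ℤ with map_add' := fun _ _ => rfl }

lemma int_sub_subsingleton (n : ℕ) : Subsingleton {H : AddSubgroup ℤ // H.index = n} := by
  constructor
  rintro ⟨H1, h1⟩ ⟨H2, h2⟩
  apply Subtype.ext
  show H1 = H2
  rw [int_subgroup_eq_zmultiples H1, int_subgroup_eq_zmultiples H2, h1, h2]

theorem main_g : ∀ ℓ, 1 ≤ ℓ → ∀ n, 0 < n →
    Finite {H : AddSubgroup (Fin ℓ → ℤ) // H.index = n} ∧ g ℓ n ≤ sig n * n ^ (ℓ - 1) := by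
  intro ℓ hℓ
  induction ℓ, hℓ using Nat.le_induction with
  | base =>
    intro n hn
    haveI := int_sub_subsingleton n
    have e := idxEquiv pi1Equiv n
    haveI hss : Subsingleton {H : AddSubgroup (Fin 1 → ℤ) // H.index = n} :=
      ⟨fun a b => e.injective (Subsingleton.elim _ _)⟩
    refine ⟨Finite.of_subsingleton, ?_⟩
    have h1 : g 1 n ≤ 1 := Finite.card_le_one_iff_subsingleton.mpr hss
    calc g 1 n ≤ 1 := h1
    _ ≤ sig n * n ^ (1 - 1) := by
        simp only [Nat.sub_self, pow_zero, mul_one]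
        exact le_trans hn (self_le_sig hn)
  | succ ℓ hℓ ih =>
    intro n hn
    obtain ⟨a, rfl⟩ : ∃ a, ℓ = a + 1 := ⟨ℓ - 1, (Nat.sub_add_cancel hℓ).symm⟩
    have e := idxEquiv (piSuccEquiv (a + 1)) n
    obtain ⟨hfin, hbound⟩ := Step.step_card (W := Fin (a + 1) → ℤ) (a + 1) hn
      (fun m hm => (ih m hm).1)
      (fun K d hd => (hom_bound (a + 1) K d hd).1)
      (fun K d hd => (hom_bound (a + 1) K d hd).2)
    constructor
    · exact Finite.of_equiv _ e.symm
    · have hterm : ∀ d ∈ n.divisors, d ^ (a + 1) * g (a + 1) (n / d) ≤ sig n * n ^ a := by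
        intro d hd
        obtain ⟨hdvd, _⟩ := Nat.mem_divisors.mp hd
        have hdpos : 0 < d := Nat.pos_of_mem_divisors hd
        have hq : d * (n / d) = n := Nat.mul_div_cancel' hdvd
        have hqpos : 0 < n / d := Nat.div_pos (Nat.le_of_dvd hn hdvd) hdpos
        have hih := (ih (n / d) hqpos).2
        have hexp : (a + 1) - 1 = a := by omega
        rw [hexp] at hih
        calc d ^ (a + 1) * g (a + 1) (n / d) ≤ d ^ (a + 1) * (sig (n / d) * (n / d) ^ a) :=
              Nat.mul_le_mul_left _ hih
        _ = (d * sig (n / d)) * (d ^ a * (n / d) ^ a) := by rw [pow_succ]; ring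
        _ = (d * sig (n / d)) * n ^ a := by rw [← mul_pow, hq]
        _ ≤ sig n * n ^ a :=
              Nat.mul_le_mul_right _ (sig_mul_le hq hn)
      have hgoalexp : (a + 1) + 1 - 1 = a + 1 := by omega
      rw [hgoalexp]
      calc g ((a + 1) + 1) n
          = Nat.card {H : AddSubgroup (ℤ × (Fin (a + 1) → ℤ)) // H.index = n} := Nat.card_congr e
      _ ≤ ∑ d ∈ n.divisors, d ^ (a + 1) * Nat.card {K : AddSubgroup (Fin (a + 1) → ℤ) // K.index = n / d} :=
            hbound
      _ = ∑ d ∈ n.divisors, d ^ (a + 1) * g (a + 1) (n / d) := rfl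
      _ ≤ ∑ _d ∈ n.divisors, sig n * n ^ a := Finset.sum_le_sum hterm
      _ = n.divisors.card * (sig n * n ^ a) := by rw [Finset.sum_const, smul_eq_mul]
      _ ≤ n * (sig n * n ^ a) := Nat.mul_le_mul_right _ card_divisors_le
      _ = sig n * n ^ (a + 1) := by rw [pow_succ]; ring

/-! ### The final induction -/

lemma N_nonneg (ℓ : ℕ) : ∀ n, 0 ≤ N ℓ n := by
  intro n
  induction n using Nat.strong_induction_on with
  | _ n ih =>
    cases n with
    | zero => rw [N]; norm_num
    | succ m =>
      rw [N]
      apply div_nonneg _ (by positivity)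
      apply Finset.sum_nonneg
      intro k _
      have hm := Finset.mem_Icc.mp k.2
      exact mul_nonneg (by positivity) (ih (m + 1 - k.1) (by omega))

lemma p_pos (n : ℕ) : 0 < p n := by
  rw [p]
  have : Nonempty (Nat.Partition n) := ⟨⟨Multiset.replicate n 1,
    fun hi => by rw [Multiset.eq_of_mem_replicate hi]; exact Nat.one_pos, by
      rw [Multiset.sum_replicate, smul_eq_mul, mul_one]⟩⟩
  exact Fintype.card_pos

theorem N_upper_bound (ℓ n : ℕ) (hℓ : 2 ≤ ℓ) (hn : 1 ≤ n) :
    N ℓ n ≤ (p n : ℚ) * (M1 n : ℚ) ^ (ℓ - 1) := by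
  clear hn
  have hℓ1 : 1 ≤ ℓ := by omega
  induction n using Nat.strong_induction_on with
  | _ n ih =>
    cases n with
    | zero =>
      rw [N]
      have h1 : (1:ℚ) ≤ (p 0 : ℚ) := by exact_mod_cast p_pos 0
      have h2 : (1:ℚ) ≤ (M1 0 : ℚ) ^ (ℓ - 1) := by
        apply one_le_pow₀
        exact_mod_cast one_le_M1 0
      nlinarith
    | succ m =>
      rw [N]
      rw [div_le_iff₀ (by positivity : (0:ℚ) < (m : ℚ) + 1)]
      have hterm : ∀ k ∈ Finset.Icc 1 (m + 1),
          (g ℓ k : ℚ) * N ℓ (m + 1 - k)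
            ≤ ((sig k * p (m + 1 - k) : ℕ) : ℚ) * (M1 (m + 1) : ℚ) ^ (ℓ - 1) := by
        intro k hk
        obtain ⟨hk1, hk2⟩ := Finset.mem_Icc.mp hk
        have hb1 : (g ℓ k : ℚ) ≤ ((sig k * k ^ (ℓ - 1) : ℕ) : ℚ) := by
          exact_mod_cast (main_g ℓ hℓ1 k (by omega)).2
        have hb2 : N ℓ (m + 1 - k) ≤ (p (m + 1 - k) : ℚ) * (M1 (m + 1 - k) : ℚ) ^ (ℓ - 1) :=
          ih (m + 1 - k) (by omega)
        have hNpos : 0 ≤ N ℓ (m + 1 - k) := N_nonneg ℓ _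
        calc (g ℓ k : ℚ) * N ℓ (m + 1 - k)
            ≤ ((sig k * k ^ (ℓ - 1) : ℕ) : ℚ) * ((p (m + 1 - k) : ℚ) * (M1 (m + 1 - k) : ℚ) ^ (ℓ - 1)) := by
              apply mul_le_mul hb1 hb2 hNpos (by positivity)
        _ = ((sig k * p (m + 1 - k) : ℕ) : ℚ) * (((k * M1 (m + 1 - k) : ℕ) : ℚ)) ^ (ℓ - 1) := by
              push_cast
              ring
        _ ≤ ((sig k * p (m + 1 - k) : ℕ) : ℚ) * (M1 (m + 1) : ℚ) ^ (ℓ - 1) := by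
              apply mul_le_mul_of_nonneg_left _ (by positivity)
              apply pow_le_pow_left₀ (by positivity)
              exact_mod_cast mul_M1_le hk1 hk2
      calc ∑ k ∈ (Finset.Icc 1 (m + 1)).attach, (g ℓ k.1 : ℚ) * N ℓ (m + 1 - k.1)
          = ∑ k ∈ Finset.Icc 1 (m + 1), (g ℓ k : ℚ) * N ℓ (m + 1 - k) :=
            Finset.sum_attach (Finset.Icc 1 (m + 1)) (fun k => (g ℓ k : ℚ) * N ℓ (m + 1 - k))
      _ ≤ ∑ k ∈ Finset.Icc 1 (m + 1), ((sig k * p (m + 1 - k) : ℕ) : ℚ) * (M1 (m + 1) : ℚ) ^ (ℓ - 1) :=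
            Finset.sum_le_sum hterm
      _ = ((∑ k ∈ Finset.Icc 1 (m + 1), sig k * p (m + 1 - k) : ℕ) : ℚ) * (M1 (m + 1) : ℚ) ^ (ℓ - 1) := by
            rw [← Finset.sum_mul]
            push_cast
            ring
      _ ≤ (((m + 1) * p (m + 1) : ℕ) : ℚ) * (M1 (m + 1) : ℚ) ^ (ℓ - 1) := by
            apply mul_le_mul_of_nonneg_right _ (by positivity)
            exact_mod_cast key_partition (m + 1)
      _ = (p (m + 1) : ℚ) * (M1 (m + 1) : ℚ) ^ (ℓ - 1) * ((m : ℚ) + 1) := by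
            push_cast
            ring
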